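/- arXiv:2310.15598 — 6 statements merged into one kernel-verified Lean document; each statement's English description precedes it below -/
import Mathlib

section
/- For integers K, K_r, r, s, t with s + t = r + 1, 1 ≤ s ≤ K_r, 1 ≤ t ≤ K - K_r, the per-partition per-receiver communication load R_p = (η₁η₂B / (C(K-r-1, K_r - s)·C(r,t))) · C(K_r - 1, s-1) · C(K - K_r, t) / (NQB), with N = C(K,r)η₁ and Q = Kη₂, equals (1/K_r)·(1 - r/K)·(1/C(K,K_r)). -/
/-!
After cancelling `η₁ η₂ B`, the claim is the identity
`Kr · C(K, Kr) · C(Kr - 1, s - 1) · C(K - Kr, t) = (K - r) · C(K, r) · C(K - r - 1, Kr - s) · C(r, t)`.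
With `a = s - 1`, `b = Kr - s`, `c = t`, `d = K - Kr - t` (so `K = a + b + c + d + 1` and `r = a + c`),
both sides equal the multinomial coefficient `K! / (a! b! c! d!)`, counting the splittings of `K`
points into a marked point and blocks of sizes `a, b, c, d`: on the left the marked point and the
blocks `a, b` are chosen first as a `Kr`-set, on the right the blocks `a, c` are chosen first as an `r`-set.
-/

open Nat

theorem succ_mul_choose_mul_choose_mul_choose_mul_factorial (p q u v : ℕ) :
    (p + q + 1) * (p + q + 1 + (u + v)).choose (u + v) * (p + q).choose p * (u + v).choose u *
      (p ! * q ! * u ! * v !) = (p + q + 1 + (u + v))! := by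
  have hpq := add_choose_mul_factorial_mul_factorial p q
  have huv := add_choose_mul_factorial_mul_factorial u v
  rw [← choose_symm_add] at hpq huv
  rw [← add_choose_mul_factorial_mul_factorial (p + q + 1) (u + v), factorial_succ, ← hpq, ← huv]
  ring

theorem succ_mul_choose_mul_choose_mul_choose_comm (a b c d : ℕ) :
    (a + b + 1) * (a + b + c + d + 1).choose (c + d) * (a + b).choose a * (c + d).choose c =
      (b + d + 1) * (a + b + c + d + 1).choose (a + c) * (b + d).choose b * (a + c).choose c := by
  have hl := succ_mul_choose_mul_choose_mul_choose_mul_factorial a b c d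
  have hr := succ_mul_choose_mul_choose_mul_choose_mul_factorial b d c a
  rw [show b + d + 1 + (c + a) = a + b + c + d + 1 by ring, add_comm c a] at hr
  rw [show a + b + 1 + (c + d) = a + b + c + d + 1 by ring] at hl
  refine Nat.eq_of_mul_eq_mul_right (by positivity : 0 < a ! * b ! * c ! * d !) ?_
  rw [hl, ← hr]
  ring

theorem mul_choose_mul_choose_mul_choose_eq {K Kr r s t : ℕ} (hKr : Kr ≤ K)
    (hst : s + t = r + 1) (hs1 : 1 ≤ s) (hsKr : s ≤ Kr) (htKt : t ≤ K - Kr) :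
    Kr * K.choose Kr * (Kr - 1).choose (s - 1) * (K - Kr).choose t =
      (K - r) * K.choose r * (K - r - 1).choose (Kr - s) * r.choose t := by
  have := succ_mul_choose_mul_choose_mul_choose_comm (s - 1) (Kr - s) t (K - Kr - t)
  rwa [show s - 1 + (Kr - s) + t + (K - Kr - t) + 1 = K by omega,
    show s - 1 + (Kr - s) = Kr - 1 by omega, show t + (K - Kr - t) = K - Kr by omega,
    show Kr - s + (K - Kr - t) = K - r - 1 by omega, show s - 1 + t = r by omega,
    show Kr - 1 + 1 = Kr by omega, show K - r - 1 + 1 = K - r by omega, choose_symm hKr] at this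

theorem stmt3_general (K Kr r s t η₁ η₂ B : ℕ)
    (hKr : Kr < K) (hst : s + t = r + 1)
    (hs1 : 1 ≤ s) (hsKr : s ≤ Kr) (htKt : t ≤ K - Kr)
    (hη₁ : 0 < η₁) (hη₂ : 0 < η₂) (hB : 0 < B) :
    ((η₁ * η₂ * B : ℝ) /
        ((Nat.choose (K - r - 1) (Kr - s) : ℝ) * (Nat.choose r t : ℝ)))
      * (Nat.choose (Kr - 1) (s - 1) : ℝ) * (Nat.choose (K - Kr) t : ℝ)
      / (((Nat.choose K r * η₁ : ℕ) : ℝ) * ((K * η₂ : ℕ) : ℝ) * (B : ℝ))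
    = (1 / (Kr : ℝ)) * (1 - (r : ℝ) / K) * (1 / (Nat.choose K Kr : ℝ)) := by
  have hrK : r < K := by omega
  have key : ((Kr * K.choose Kr * (Kr - 1).choose (s - 1) * (K - Kr).choose t : ℕ) : ℝ) =
      ((K - r) * K.choose r * (K - r - 1).choose (Kr - s) * r.choose t : ℕ) :=
    congrArg _ (mul_choose_mul_choose_mul_choose_eq hKr.le hst hs1 hsKr htKt)
  push_cast [Nat.cast_sub hrK.le] at key ⊢
  have : (0 : ℝ) < (K - r - 1).choose (Kr - s) := mod_cast choose_pos (by omega)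
  have : (0 : ℝ) < r.choose t := mod_cast choose_pos (by omega)
  have : (0 : ℝ) < K.choose r := mod_cast choose_pos hrK.le
  have : (0 : ℝ) < K.choose Kr := mod_cast choose_pos hKr.le
  have : (0 : ℝ) < Kr := mod_cast (by omega : 0 < Kr)
  have : (0 : ℝ) < K := mod_cast (by omega : 0 < K)
  field_simp
  linear_combination key

theorem stmt3 (K Kr r s t η₁ η₂ B : ℕ)
    (hKr : Kr < K) (hrK : r ≤ K) (hst : s + t = r + 1)
    (hs1 : 1 ≤ s) (hsKr : s ≤ Kr) (ht1 : 1 ≤ t) (htKt : t ≤ K - Kr)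
    (hKrs : Kr - s ≤ K - r - 1)
    (hη₁ : 0 < η₁) (hη₂ : 0 < η₂) (hB : 0 < B) :
    ((η₁ * η₂ * B : ℝ) /
        ((Nat.choose (K - r - 1) (Kr - s) : ℝ) * (Nat.choose r t : ℝ)))
      * (Nat.choose (Kr - 1) (s - 1) : ℝ) * (Nat.choose (K - Kr) t : ℝ)
      / (((Nat.choose K r * η₁ : ℕ) : ℝ) * ((K * η₂ : ℕ) : ℝ) * (B : ℝ))
    = (1 / (Kr : ℝ)) * (1 - (r : ℝ) / K) * (1 / (Nat.choose K Kr : ℝ)) :=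
  stmt3_general K Kr r s t η₁ η₂ B hKr hst hs1 hsKr htKt hη₁ hη₂ hB
end

section
/- For fixed integers r ≥ 1 and K with K - r - 1 ≥ 1, the function Φ(t) = 1/(C(r,t)·C(K-r-1,t)·t) on t ∈ {1,...,min(r, K-r-1)} is minimized at t* = ⌊1 + (-r² + rK - r)/K⌋; specifically Φ(t-1) ≥ Φ(t) for t ≤ t* and Φ(t-1) ≤ Φ(t) for t > t*. -/
/-- `Φ(t) = 1/(C(r,t)·C(K-r-1,t)·t)` is minimized at `t* = ⌊1 + (rK - r² - r)/K⌋
= 1 + r(K-r-1)/K` (nat division = floor since `r(K-r-1) ≥ 0`):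
it is non-increasing up to `t*` and non-decreasing after. -/
theorem stmt5 (r K : ℕ) (hr : 1 ≤ r) (hK : r + 2 ≤ K) :
    ∀ t : ℕ, 2 ≤ t → t ≤ min r (K - r - 1) →
      (t ≤ 1 + r * (K - r - 1) / K →
        1 / ((Nat.choose r t : ℝ) * (Nat.choose (K - r - 1) t : ℝ) * t)
          ≤ 1 / ((Nat.choose r (t - 1) : ℝ) * (Nat.choose (K - r - 1) (t - 1) : ℝ) * (t - 1 : ℕ)))
      ∧ (1 + r * (K - r - 1) / K < t →
        1 / ((Nat.choose r (t - 1) : ℝ) * (Nat.choose (K - r - 1) (t - 1) : ℝ) * (t - 1 : ℕ))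
          ≤ 1 / ((Nat.choose r t : ℝ) * (Nat.choose (K - r - 1) t : ℝ) * t)) := by
  intro t ht2 htmin
  obtain ⟨u, rfl⟩ : ∃ u, t = u + 1 := ⟨t - 1, by omega⟩
  set s := K - r - 1 with hs
  have hKs : K = r + s + 1 := by omega
  have hKpos : 0 < K := by omega
  have hu1 : 1 ≤ u := by omega
  have hur : u + 1 ≤ r := by omega
  have hus : u + 1 ≤ s := by omega
  have hcr : 0 < r.choose u := Nat.choose_pos (by omega)
  have hcs : 0 < s.choose u := Nat.choose_pos (by omega)
  have hcr' : 0 < r.choose (u + 1) := Nat.choose_pos hur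
  have hcs' : 0 < s.choose (u + 1) := Nat.choose_pos hus
  have key1 : r.choose (u + 1) * (u + 1) = r.choose u * (r - u) :=
    Nat.choose_succ_right_eq r u
  have key2 : s.choose (u + 1) * (u + 1) = s.choose u * (s - u) :=
    Nat.choose_succ_right_eq s u
  have hmul : r.choose (u + 1) * s.choose (u + 1) * (u + 1) * (u + 1)
      = (r.choose u * s.choose u) * ((r - u) * (s - u)) := by
    calc r.choose (u + 1) * s.choose (u + 1) * (u + 1) * (u + 1)
        = (r.choose (u + 1) * (u + 1)) * (s.choose (u + 1) * (u + 1)) := by ring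
      _ = (r.choose u * (r - u)) * (s.choose u * (s - u)) := by rw [key1, key2]
      _ = (r.choose u * s.choose u) * ((r - u) * (s - u)) := by ring
  have hsimp : u + 1 - 1 = u := rfl
  have hDu : (0:ℝ) < (r.choose u : ℝ) * (s.choose u : ℝ) * (u : ℕ) := by
    have : 0 < r.choose u * s.choose u * u := by positivity
    exact_mod_cast this
  have hDt : (0:ℝ) < (r.choose (u+1) : ℝ) * (s.choose (u+1) : ℝ) * ((u+1 : ℕ) : ℝ) := by
    have : 0 < r.choose (u+1) * s.choose (u+1) * (u+1) := by positivity
    exact_mod_cast this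
  constructor
  · intro hle
    have hdiv : u * K ≤ r * s := by
      have : u ≤ r * s / K := by omega
      exact (Nat.le_div_iff_mul_le hKpos).mp this
    have hprod : u * (u + 1) ≤ (r - u) * (s - u) := by
      have h1 : u ≤ r := by omega
      have h2 : u ≤ s := by omega
      have hdivz : (u:ℤ) * (r + s + 1) ≤ r * s := by
        rw [hKs] at hdiv; exact_mod_cast hdiv
      zify [h1, h2]
      ring_nf at hdivz ⊢
      linarith [hdivz]
    have hnat : r.choose u * s.choose u * u ≤ r.choose (u+1) * s.choose (u+1) * (u+1) := by
      have h4 : (r.choose u * s.choose u * u) * (u + 1)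
          ≤ (r.choose (u+1) * s.choose (u+1) * (u+1)) * (u + 1) := by
        rw [hmul]
        calc (r.choose u * s.choose u * u) * (u + 1)
            = (r.choose u * s.choose u) * (u * (u + 1)) := by ring
          _ ≤ (r.choose u * s.choose u) * ((r - u) * (s - u)) :=
              Nat.mul_le_mul_left _ hprod
      exact Nat.le_of_mul_le_mul_right h4 (by omega)
    have hnatR : (r.choose u : ℝ) * (s.choose u : ℝ) * ((u:ℕ):ℝ)
        ≤ (r.choose (u+1) : ℝ) * (s.choose (u+1) : ℝ) * ((u+1:ℕ):ℝ) := by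
      exact_mod_cast hnat
    simpa [hsimp] using one_div_le_one_div_of_le hDu hnatR
  · intro hlt
    have hdiv : r * s < u * K := by
      have : r * s / K < u := by omega
      exact (Nat.div_lt_iff_lt_mul hKpos).mp this
    have hprod : (r - u) * (s - u) ≤ u * (u + 1) := by
      have h1 : u ≤ r := by omega
      have h2 : u ≤ s := by omega
      have hdivz : (r:ℤ) * s < u * (r + s + 1) := by
        rw [hKs] at hdiv; exact_mod_cast hdiv
      zify [h1, h2]
      ring_nf at hdivz ⊢
      linarith [hdivz]
    have hnat : r.choose (u+1) * s.choose (u+1) * (u+1) ≤ r.choose u * s.choose u * u := by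
      have h4 : (r.choose (u+1) * s.choose (u+1) * (u+1)) * (u + 1)
          ≤ (r.choose u * s.choose u * u) * (u + 1) := by
        rw [hmul]
        calc (r.choose u * s.choose u) * ((r - u) * (s - u))
            ≤ (r.choose u * s.choose u) * (u * (u + 1)) :=
              Nat.mul_le_mul_left _ hprod
          _ = (r.choose u * s.choose u * u) * (u + 1) := by ring
      exact Nat.le_of_mul_le_mul_right h4 (by omega)
    have hnatR : (r.choose (u+1) : ℝ) * (s.choose (u+1) : ℝ) * ((u+1:ℕ):ℝ)
        ≤ (r.choose u : ℝ) * (s.choose u : ℝ) * ((u:ℕ):ℝ) := by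
      exact_mod_cast hnat
    simpa [hsimp] using one_div_le_one_div_of_le hDt hnatR
end

section
/- For real r ≥ 1 and real K ≥ (r + 4 + √(r² + 16r))/2, the real number K_t* = (r - K + √(r(K-1)(K-r)))/(r-1) (for r > 1) satisfies K_t* ≥ 2. -/
theorem stmt8 (r K : ℝ) (hr : 1 < r) (hrK : r < K)
    (hK : K ≥ (r + 4 + Real.sqrt (r ^ 2 + 16 * r)) / 2) :
    (r - K + Real.sqrt (r * (K - 1) * (K - r))) / (r - 1) ≥ 2 := by
  have h16 : Real.sqrt (r ^ 2 + 8 * r) ≤ Real.sqrt (r ^ 2 + 16 * r) :=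
    Real.sqrt_le_sqrt (by nlinarith)
  have h8 : Real.sqrt (r ^ 2 + 8 * r) ^ 2 = r ^ 2 + 8 * r :=
    Real.sq_sqrt (by nlinarith)
  have hpos : (0:ℝ) ≤ Real.sqrt (r ^ 2 + 8 * r) := Real.sqrt_nonneg _
  have hKb : Real.sqrt (r ^ 2 + 8 * r) ≤ 2 * K - (r + 4) := by linarith
  have hq : r ^ 2 + 8 * r ≤ (2 * K - (r + 4)) ^ 2 := by nlinarith
  have hs : r + K - 2 ≤ Real.sqrt (r * (K - 1) * (K - r)) := by
    rw [show r + K - 2 = Real.sqrt ((r + K - 2) ^ 2) from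
      (Real.sqrt_sq (by linarith)).symm]
    exact Real.sqrt_le_sqrt (by nlinarith)
  rw [ge_iff_le, le_div_iff₀ (by linarith : (0:ℝ) < r - 1)]
  linarith
end

section
/- For integers r ≥ 1 and K ≥ 2(r + 1 + √(r² + 1)), with K_t = ⌊K/2⌋ and K_r = K - K_t, the quantity K_t·K_r·r/(K_t·r + K_r - r) is at least 2r; equivalently the half-duplex CPC NDT with this choice is at most the full-duplex OSL NDT (1/(2r))(1 - r/K). -/
theorem stmt12 (r K : ℕ) (hr : 1 ≤ r)
    (hK : (K : ℝ) ≥ 2 * ((r : ℝ) + 1 + Real.sqrt ((r : ℝ) ^ 2 + 1))) :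
    ((K / 2 : ℕ) : ℝ) * ((K - K / 2 : ℕ) : ℝ) * r /
        (((K / 2 : ℕ) : ℝ) * r + ((K - K / 2 : ℕ) : ℝ) - r) ≥ 2 * r := by
  have hsqrt : (r : ℝ) < Real.sqrt ((r : ℝ) ^ 2 + 1) := by
    rw [show ((r : ℝ) ^ 2 + 1) = ((r:ℝ)^2 + 1) from rfl]
    nlinarith [Real.sq_sqrt (by positivity : (0:ℝ) ≤ (r:ℝ)^2 + 1),
      Real.sqrt_nonneg ((r:ℝ)^2 + 1)]
  have hKgt : ((4 * r + 2 : ℕ) : ℝ) < (K : ℝ) := by push_cast; nlinarith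
  have hKnat : 4 * r + 3 ≤ K := by exact_mod_cast Nat.cast_lt.mp hKgt
  have ht : 2 * r + 1 ≤ K / 2 := by omega
  have hs : K / 2 ≤ K - K / 2 := by omega
  have hsum : 4 * r + 3 ≤ K / 2 + (K - K / 2) := by omega
  set T : ℕ := K / 2 with hT
  set S : ℕ := K - K / 2 with hS
  have htR : (2 * r + 1 : ℝ) ≤ (T : ℝ) := by exact_mod_cast ht
  have hsR : (T : ℝ) ≤ (S : ℝ) := by exact_mod_cast hs
  have hsumR : (4 * r + 3 : ℝ) ≤ (T : ℝ) + (S : ℝ) := by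
    have : ((4 * r + 3 : ℕ) : ℝ) ≤ ((T + S : ℕ) : ℝ) := by exact_mod_cast (by omega : 4*r+3 ≤ T + S)
    push_cast at this; linarith
  have hrR : (1 : ℝ) ≤ (r : ℝ) := by exact_mod_cast hr
  have hD : (0 : ℝ) < (T : ℝ) * r + (S : ℝ) - r := by nlinarith
  rw [ge_iff_le, le_div_iff₀ hD]
  have key : (S : ℝ) * ((T : ℝ) - 2) ≥ 2 * r * ((T : ℝ) - 1) := by
    nlinarith [mul_nonneg (by linarith : (0:ℝ) ≤ (S:ℝ) - T) (by linarith : (0:ℝ) ≤ (T:ℝ) - 2*r - 1),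
      mul_nonneg (by linarith : (0:ℝ) ≤ (T:ℝ) - 2*r - 1) (by linarith : (0:ℝ) ≤ (r:ℝ) - 1),
      mul_nonneg (by linarith : (0:ℝ) ≤ (T:ℝ) + S - 4*r - 3) (by linarith : (0:ℝ) ≤ (r:ℝ) - 1),
      mul_nonneg (by linarith : (0:ℝ) ≤ (T:ℝ) + S - 4*r - 3) (by linarith : (0:ℝ) ≤ (T:ℝ) - 2*r - 1)]
  nlinarith [key, hrR]
end

section
/- For integers K ≥ 2 and 1 ≤ t ≤ ⌊K/2⌋, the sequence C_t(i) = C(K-i, t-i)·(K-t)/(C(K,t)·t) for i ∈ [t] (and C_t(i) = 0 for i > t) is non-increasing and convex in i, i.e., C_t(i+1) - C_t(i) ≤ 0 and C_t(i+2) - 2C_t(i+1) + C_t(i) ≥ 0 for all valid i. -/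
private lemma pascal_mono (a b : ℕ) : Nat.choose a b ≤ Nat.choose (a+1) (b+1) := by
  rw [Nat.choose_succ_succ]; omega

private lemma pascal_convex (a b : ℕ) :
    2 * Nat.choose (a+1) (b+1) ≤ Nat.choose a b + Nat.choose (a+2) (b+2) := by
  rw [Nat.choose_succ_succ (a+1) (b+1), Nat.choose_succ_succ a b,
    Nat.choose_succ_succ a (b+1)]
  simp only [Nat.succ_eq_add_one]
  omega

/-- The sequence `C_t(i) = C(K-i,t-i)(K-t)/(C(K,t)t)` for `1 ≤ i ≤ t` (and `0` for
`t < i ≤ K`) is non-increasing and convex in `i`. -/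
theorem stmt17 (K t : ℕ) (hK : 2 ≤ K) (ht1 : 1 ≤ t) (ht : t ≤ K / 2) :
    let C : ℕ → ℝ := fun i =>
      if i ≤ t then ((Nat.choose (K - i) (t - i) : ℝ) * ((K : ℝ) - t)) /
        ((Nat.choose K t : ℝ) * t) else 0
    (∀ i : ℕ, 1 ≤ i → i + 1 ≤ K → C (i + 1) - C i ≤ 0)
    ∧ (∀ i : ℕ, 1 ≤ i → i + 2 ≤ K → C (i + 2) - 2 * C (i + 1) + C i ≥ 0) := by
  intro C
  have h2t : 2 * t ≤ K := by omega
  have htK : t ≤ K := by omega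
  have hD : (0:ℝ) < (Nat.choose K t : ℝ) * t := by
    have h1 : 0 < Nat.choose K t := Nat.choose_pos htK
    have h2 : (0:ℝ) < (Nat.choose K t : ℝ) := by exact_mod_cast h1
    have h3 : (0:ℝ) < (t:ℝ) := by exact_mod_cast ht1
    positivity
  have hKt : (0:ℝ) ≤ (K:ℝ) - t := by
    have : (t:ℝ) ≤ (K:ℝ) := by exact_mod_cast htK
    linarith
  constructor
  · intro i hi hiK
    by_cases h1 : i + 1 ≤ t
    · simp only [C, if_pos h1, if_pos (by omega : i ≤ t)]
      rw [sub_nonpos, div_le_div_iff_of_pos_right hD]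
      have key := pascal_mono (K - i - 1) (t - i - 1)
      have e1 : K - i - 1 + 1 = K - i := by omega
      have e2 : t - i - 1 + 1 = t - i := by omega
      rw [e1, e2] at key
      have e3 : K - (i+1) = K - i - 1 := by omega
      have e4 : t - (i+1) = t - i - 1 := by omega
      rw [e3, e4]
      have : (Nat.choose (K - i - 1) (t - i - 1) : ℝ) ≤ (Nat.choose (K - i) (t - i) : ℝ) := by
        exact_mod_cast key
      exact mul_le_mul_of_nonneg_right this hKt
    · by_cases h0 : i ≤ t
      · simp only [C, if_neg h1, if_pos h0]
        have : (0:ℝ) ≤ ((Nat.choose (K - i) (t - i) : ℝ) * ((K : ℝ) - t)) /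
            ((Nat.choose K t : ℝ) * t) :=
          div_nonneg (mul_nonneg (by positivity) hKt) hD.le
        linarith
      · simp only [C, if_neg h1, if_neg h0]
        norm_num
  · intro i hi hiK
    by_cases h2 : i + 2 ≤ t
    · simp only [C, if_pos h2, if_pos (by omega : i + 1 ≤ t), if_pos (by omega : i ≤ t)]
      rw [ge_iff_le, show ((Nat.choose (K - (i+2)) (t - (i+2)) : ℝ) * ((K : ℝ) - t)) /
            ((Nat.choose K t : ℝ) * t) -
          2 * (((Nat.choose (K - (i+1)) (t - (i+1)) : ℝ) * ((K : ℝ) - t)) /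
            ((Nat.choose K t : ℝ) * t)) +
          ((Nat.choose (K - i) (t - i) : ℝ) * ((K : ℝ) - t)) /
            ((Nat.choose K t : ℝ) * t)
        = (((Nat.choose (K - (i+2)) (t - (i+2)) : ℝ)
            - 2 * (Nat.choose (K - (i+1)) (t - (i+1)) : ℝ)
            + (Nat.choose (K - i) (t - i) : ℝ)) * ((K : ℝ) - t)) /
            ((Nat.choose K t : ℝ) * t) from by ring]
      apply div_nonneg _ hD.le
      apply mul_nonneg _ hKt
      have key := pascal_convex (K - i - 2) (t - i - 2)
      have e1 : K - i - 2 + 1 = K - (i+1) := by omega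
      have e2 : t - i - 2 + 1 = t - (i+1) := by omega
      have e3 : K - i - 2 + 2 = K - i := by omega
      have e4 : t - i - 2 + 2 = t - i := by omega
      rw [e1, e2, e3, e4] at key
      have e5 : K - (i+2) = K - i - 2 := by omega
      have e6 : t - (i+2) = t - i - 2 := by omega
      rw [e5, e6]
      have : 2 * (Nat.choose (K - (i+1)) (t - (i+1)) : ℝ) ≤
          (Nat.choose (K - i - 2) (t - i - 2) : ℝ) + (Nat.choose (K - i) (t - i) : ℝ) := by
        exact_mod_cast key
      linarith
    · by_cases h1 : i + 1 ≤ t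
      · -- i + 1 = t
        have hit : i + 1 = t := by omega
        simp only [C, if_neg h2, if_pos h1, if_pos (by omega : i ≤ t)]
        have e1 : t - (i+1) = 0 := by omega
        have e2 : K - (i+1) = K - t := by omega
        have e3 : t - i = 1 := by omega
        have e4 : K - i = K - t + 1 := by omega
        rw [e1, e2, e3, e4, Nat.choose_zero_right, Nat.choose_one_right]
        rw [ge_iff_le, show (0:ℝ) -
            2 * (((1:ℕ):ℝ) * ((K : ℝ) - t) / ((Nat.choose K t : ℝ) * t)) +
            ((K - t + 1 : ℕ) : ℝ) * ((K : ℝ) - t) / ((Nat.choose K t : ℝ) * t)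
          = ((((K - t + 1 : ℕ) : ℝ) - 2) * ((K : ℝ) - t)) / ((Nat.choose K t : ℝ) * t)
          from by push_cast; ring]
        apply div_nonneg _ hD.le
        apply mul_nonneg _ hKt
        have : (2:ℕ) ≤ K - t + 1 := by omega
        have : (2:ℝ) ≤ ((K - t + 1 : ℕ) : ℝ) := by exact_mod_cast this
        linarith
      · by_cases h0 : i ≤ t
        · -- i = t
          simp only [C, if_neg h2, if_neg h1, if_pos h0]
          have : (0:ℝ) ≤ ((Nat.choose (K - i) (t - i) : ℝ) * ((K : ℝ) - t)) /
              ((Nat.choose K t : ℝ) * t) :=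
            div_nonneg (mul_nonneg (by positivity) hKt) hD.le
          linarith
        · simp only [C, if_neg h2, if_neg h1, if_neg h0]
          norm_num
end

section
/- For integers K ≥ 2 and 1 < r < K/2, the half-duplex CPC NDT with K_r = K/2 satisfies (1-r/K)(2K + 2K/r - 4)/K² < (1-r/K)(2K + 2(K-1)/r - 4)/(K² - K - 1), i.e., CPC improves on the half-duplex BW scheme; this reduces to the inequality K² + K(1/r - 1) - 2 ≥ 0 which holds for all K ≥ 2 and r ≥ 1. -/
/-- For `r ≥ 1`, `K ≥ 2`, `r < K/2`, the half-duplex CPC NDT with `K_r = K/2` is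
strictly smaller than the half-duplex BW NDT; this reduces to
`K² + K(1/r - 1) - 2 ≥ 0`. -/
theorem stmt19 (r K : ℝ) (hr : 1 ≤ r) (hK : 2 ≤ K) (hrK : r < K / 2) :
    (1 - r / K) * ((2 * K + 2 * K / r - 4) / K ^ 2)
      < (1 - r / K) * ((2 * K + 2 * (K - 1) / r - 4) / (K ^ 2 - K - 1))
    ∧ K ^ 2 + K * (1 / r - 1) - 2 ≥ 0 := by
  have hrpos : (0:ℝ) < r := lt_of_lt_of_le one_pos hr
  have hKpos : (0:ℝ) < K := by linarith
  have hK2 : (0:ℝ) < K ^ 2 := by positivity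
  have hden : (0:ℝ) < K ^ 2 - K - 1 := by nlinarith
  have hfrac : 0 < 1 - r / K := by
    rw [sub_pos, div_lt_one hKpos]; linarith
  have hu : r * r⁻¹ = 1 := mul_inv_cancel₀ hrpos.ne'
  constructor
  · apply mul_lt_mul_of_pos_left _ hfrac
    rw [div_lt_div_iff₀ hK2 hden]
    simp only [div_eq_mul_inv]
    nlinarith [hu, mul_pos hrpos hden, mul_pos (inv_pos.mpr hrpos) hden,
      mul_nonneg (inv_pos.mpr hrpos).le hK2.le, sq_nonneg (K - 2*r)]
  · have h1 : 0 < K * (1 / r) := by positivity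
    nlinarith [h1]
end
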